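/- Let (X,d) be a complete separable metric space and let μ₁, μ₂ be Borel probability measures on X. Then √(Var(μ₁, μ₂)) ≤ d_{W₁}(μ₁, μ₂) + √(Var(μ₁)) + √(Var(μ₂)), where all quantities are understood as values in [0,∞]. -/
import Mathlib


open MeasureTheory Filter Topology
open scoped ENNReal

/-- The variance `Var(μ,ν) = ∫∫ d(x,y)² dμ dν`, valued in `[0,∞]`. -/
noncomputable def var2 {X : Type*} [MetricSpace X] [MeasurableSpace X]
    (μ ν : Measure X) : ℝ≥0∞ :=
  ∫⁻ x, ∫⁻ y, edist x y ^ 2 ∂ν ∂μ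

/-- `q` is a coupling of `μ` and `ν`: a probability measure on `X × X` whose
marginals are `μ` and `ν`. -/
def IsCoupling {X : Type*} [MeasurableSpace X]
    (q : Measure (X × X)) (μ ν : Measure X) : Prop :=
  IsProbabilityMeasure q ∧ q.map Prod.fst = μ ∧ q.map Prod.snd = ν

/-- The `W₁`-Wasserstein distance, as an infimum over couplings, valued in `[0,∞]`. -/
noncomputable def wass1 {X : Type*} [MetricSpace X] [MeasurableSpace X]
    (μ ν : Measure X) : ℝ≥0∞ :=
  sInf { r : ℝ≥0∞ | ∃ q : Measure (X × X), IsCoupling q μ ν ∧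
    r = ∫⁻ p, edist p.1 p.2 ∂q }

/-- Jensen/Cauchy–Schwarz: `∫ F^{1/2} ≤ (∫ F)^{1/2}` for a probability measure. -/
lemma lintegral_rpow_half_le {α : Type*} [MeasurableSpace α] (μ : Measure α)
    [IsProbabilityMeasure μ] {F : α → ℝ≥0∞} (hF : AEMeasurable F μ) :
    ∫⁻ a, (F a) ^ (1/2 : ℝ) ∂μ ≤ (∫⁻ a, F a ∂μ) ^ (1/2 : ℝ) := by
  have hconj : Real.HolderConjugate 2 2 := by constructor <;> norm_num
  have h := ENNReal.lintegral_mul_le_Lp_mul_Lq μ hconj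
    (f := fun a => (F a) ^ (1/2 : ℝ)) (g := fun _ => 1)
    (hF.pow_const _) aemeasurable_const
  have e1 : ∀ x : ℝ≥0∞, (x ^ (1/2:ℝ)) ^ (2:ℝ) = x := by
    intro x; rw [← ENNReal.rpow_mul]; norm_num
  simp only [e1] at h
  simpa [lintegral_const, measure_univ] using h

section Aux
variable {X : Type*} [MetricSpace X] [TopologicalSpace.SeparableSpace X]
  [MeasurableSpace X] [BorelSpace X]

lemma sq_eq_rpow (x : ℝ≥0∞) : x ^ 2 = x ^ (2:ℝ) := by
  rw [← ENNReal.rpow_natCast x 2]; norm_num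

/-- Pointwise bound: for any `a b`,
  `√Var(μ₁,μ₂) ≤ (∫ d(x,a)² dμ₁)^{1/2} + d(a,b) + (∫ d(b,y)² dμ₂)^{1/2}`. -/
lemma pointwise_bound (μ₁ μ₂ : Measure X) [IsProbabilityMeasure μ₁]
    [IsProbabilityMeasure μ₂] (a b : X) :
    (var2 μ₁ μ₂) ^ (1/2 : ℝ) ≤
      (∫⁻ x, edist x a ^ 2 ∂μ₁) ^ (1/2 : ℝ) + edist a b
        + (∫⁻ y, edist b y ^ 2 ∂μ₂) ^ (1/2 : ℝ) := by
  haveI : SecondCountableTopology X := UniformSpace.secondCountable_of_separable X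
  set π := μ₁.prod μ₂
  have hmeas : Measurable fun p : X × X => edist p.1 p.2 :=
    measurable_fst.edist measurable_snd
  have hf : AEMeasurable (fun p : X × X => edist p.1 a) π :=
    (measurable_fst.edist measurable_const).aemeasurable
  have hg : AEMeasurable (fun _ : X × X => edist a b) π := aemeasurable_const
  have hh : AEMeasurable (fun p : X × X => edist b p.2) π :=
    (measurable_const.edist measurable_snd).aemeasurable
  have hvar : var2 μ₁ μ₂ = ∫⁻ p, edist p.1 p.2 ^ (2:ℝ) ∂π := by
    rw [var2]
    simp_rw [sq_eq_rpow]
    exact (lintegral_prod _ ((hmeas.pow_const (2:ℝ)).aemeasurable)).symm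
  have tri : ∀ p : X × X, edist p.1 p.2 ≤
      ((fun p : X × X => edist p.1 a) + (fun _ : X × X => edist a b)
        + fun p : X × X => edist b p.2) p := by
    intro p
    calc edist p.1 p.2 ≤ edist p.1 b + edist b p.2 := edist_triangle _ _ _
      _ ≤ (edist p.1 a + edist a b) + edist b p.2 := by
          gcongr; exact edist_triangle _ _ _
  have step1 : (var2 μ₁ μ₂) ^ (1/2:ℝ) ≤
      (∫⁻ p, (((fun p : X × X => edist p.1 a) + (fun _ : X × X => edist a b)
        + fun p : X × X => edist b p.2) p) ^ (2:ℝ) ∂π) ^ (1/2:ℝ) := by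
    rw [hvar]
    refine ENNReal.rpow_le_rpow ?_ (by norm_num)
    exact lintegral_mono fun p => ENNReal.rpow_le_rpow (tri p) (by norm_num)
  have step2 := ENNReal.lintegral_Lp_add_le (μ := π)
    (f := (fun p : X × X => edist p.1 a) + fun _ : X × X => edist a b)
    (g := fun p : X × X => edist b p.2) (hf.add hg) hh (le_refl 1 |>.trans one_le_two)
  have step3 := ENNReal.lintegral_Lp_add_le (μ := π)
    (f := fun p : X × X => edist p.1 a)
    (g := fun _ : X × X => edist a b) hf hg one_le_two
  have c1 : (∫⁻ p, (edist p.1 a) ^ (2:ℝ) ∂π) = ∫⁻ x, edist x a ^ 2 ∂μ₁ := by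
    rw [lintegral_prod _ (((measurable_fst.edist measurable_const).pow_const (2:ℝ)).aemeasurable)]
    simp only [lintegral_const, measure_univ, mul_one, sq_eq_rpow]
  have c2 : (∫⁻ _p : X × X, (edist a b) ^ (2:ℝ) ∂π) ^ (1/2:ℝ) = edist a b := by
    rw [lintegral_const, measure_univ, mul_one, ← ENNReal.rpow_mul]
    norm_num
  have c3 : (∫⁻ p, (edist b p.2) ^ (2:ℝ) ∂π) = ∫⁻ y, edist b y ^ 2 ∂μ₂ := by
    rw [lintegral_prod _ (((measurable_const.edist measurable_snd).pow_const (2:ℝ)).aemeasurable)]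
    simp only [sq_eq_rpow, lintegral_const, measure_univ, one_mul, mul_one]
  calc (var2 μ₁ μ₂) ^ (1/2:ℝ)
      ≤ (∫⁻ p, (((fun p : X × X => edist p.1 a) + (fun _ : X × X => edist a b)
          + fun p : X × X => edist b p.2) p) ^ (2:ℝ) ∂π) ^ (1/2:ℝ) := step1
    _ ≤ (∫⁻ p, (((fun p : X × X => edist p.1 a) + fun _ : X × X => edist a b) p) ^ (2:ℝ) ∂π) ^ (1/2:ℝ)
          + (∫⁻ p, (edist b p.2) ^ (2:ℝ) ∂π) ^ (1/2:ℝ) := step2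
    _ ≤ ((∫⁻ p, (edist p.1 a) ^ (2:ℝ) ∂π) ^ (1/2:ℝ)
          + (∫⁻ _p : X × X, (edist a b) ^ (2:ℝ) ∂π) ^ (1/2:ℝ))
          + (∫⁻ p, (edist b p.2) ^ (2:ℝ) ∂π) ^ (1/2:ℝ) := by gcongr
    _ = (∫⁻ x, edist x a ^ 2 ∂μ₁) ^ (1/2 : ℝ) + edist a b
          + (∫⁻ y, edist b y ^ 2 ∂μ₂) ^ (1/2 : ℝ) := by rw [c1, c2, c3]

end Aux

/-- For Borel probability measures `μ₁, μ₂` on a complete separable metric space,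
`√(Var(μ₁,μ₂)) ≤ d_{W₁}(μ₁,μ₂) + √(Var(μ₁)) + √(Var(μ₂))`. -/
theorem sqrt_var2_le_wass1_add {X : Type*} [MetricSpace X] [CompleteSpace X]
    [TopologicalSpace.SeparableSpace X] [MeasurableSpace X] [BorelSpace X]
    (μ₁ μ₂ : Measure X) [IsProbabilityMeasure μ₁] [IsProbabilityMeasure μ₂] :
    (var2 μ₁ μ₂) ^ (1/2 : ℝ) ≤
      wass1 μ₁ μ₂ + (var2 μ₁ μ₁) ^ (1/2 : ℝ) + (var2 μ₂ μ₂) ^ (1/2 : ℝ) := by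
  haveI : SecondCountableTopology X := UniformSpace.secondCountable_of_separable X
  rw [wass1, add_assoc, ENNReal.sInf_add]
  refine le_iInf₂ fun r hr => ?_
  obtain ⟨q, ⟨hq, hq1, hq2⟩, rfl⟩ := hr
  haveI := hq
  set G : X → ℝ≥0∞ := fun a => (∫⁻ x, edist x a ^ 2 ∂μ₁) ^ (1/2:ℝ) with hGdef
  set H : X → ℝ≥0∞ := fun b => (∫⁻ y, edist b y ^ 2 ∂μ₂) ^ (1/2:ℝ) with hHdef
  have hGm : Measurable G := by
    apply Measurable.pow_const
    exact Measurable.lintegral_prod_right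
      (f := fun a x => edist x a ^ 2)
      ((measurable_snd.edist measurable_fst).pow_const 2)
  have hHm : Measurable H := by
    apply Measurable.pow_const
    exact Measurable.lintegral_prod_right
      (f := fun b y => edist b y ^ 2)
      ((measurable_fst.edist measurable_snd).pow_const 2)
  have hpt : ∀ p : X × X, (var2 μ₁ μ₂) ^ (1/2:ℝ) ≤ G p.1 + edist p.1 p.2 + H p.2 :=
    fun p => pointwise_bound μ₁ μ₂ p.1 p.2
  have hsplit : ∫⁻ p, (G p.1 + edist p.1 p.2 + H p.2) ∂q
      = (∫⁻ p, G p.1 ∂q) + (∫⁻ p, edist p.1 p.2 ∂q) + ∫⁻ p, H p.2 ∂q := by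
    rw [lintegral_add_right _ (show Measurable fun p : X × X => H p.2 from hHm.comp measurable_snd),
      lintegral_add_right _ (measurable_fst.edist measurable_snd)]
  have hGq : ∫⁻ p, G p.1 ∂q = ∫⁻ a, G a ∂μ₁ := by
    rw [← hq1, lintegral_map hGm measurable_fst]
  have hHq : ∫⁻ p, H p.2 ∂q = ∫⁻ b, H b ∂μ₂ := by
    rw [← hq2, lintegral_map hHm measurable_snd]
  have hGj : ∫⁻ a, G a ∂μ₁ ≤ (var2 μ₁ μ₁) ^ (1/2:ℝ) := by
    refine le_trans (lintegral_rpow_half_le μ₁ ?_) ?_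
    · exact (Measurable.lintegral_prod_right (f := fun a x => edist x a ^ 2)
        ((measurable_snd.edist measurable_fst).pow_const 2)).aemeasurable
    · apply ENNReal.rpow_le_rpow _ (by norm_num)
      refine le_of_eq ?_
      rw [var2]
      rw [lintegral_lintegral_swap
        ((measurable_snd.edist measurable_fst).pow_const 2).aemeasurable]
  have hHj : ∫⁻ b, H b ∂μ₂ ≤ (var2 μ₂ μ₂) ^ (1/2:ℝ) := by
    refine le_trans (lintegral_rpow_half_le μ₂ ?_) (le_of_eq rfl)
    exact (Measurable.lintegral_prod_right (f := fun b y => edist b y ^ 2)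
      ((measurable_fst.edist measurable_snd).pow_const 2)).aemeasurable
  calc (var2 μ₁ μ₂) ^ (1/2:ℝ)
      = ∫⁻ _p : X × X, (var2 μ₁ μ₂) ^ (1/2:ℝ) ∂q := by
        rw [lintegral_const, measure_univ, mul_one]
    _ ≤ ∫⁻ p, (G p.1 + edist p.1 p.2 + H p.2) ∂q := lintegral_mono hpt
    _ = (∫⁻ a, G a ∂μ₁) + (∫⁻ p, edist p.1 p.2 ∂q) + ∫⁻ b, H b ∂μ₂ := by
        rw [hsplit, hGq, hHq]
    _ ≤ (var2 μ₁ μ₁) ^ (1/2:ℝ) + (∫⁻ p, edist p.1 p.2 ∂q) + (var2 μ₂ μ₂) ^ (1/2:ℝ) := by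
        gcongr
    _ = (∫⁻ p, edist p.1 p.2 ∂q) + ((var2 μ₁ μ₁) ^ (1/2:ℝ) + (var2 μ₂ μ₂) ^ (1/2:ℝ)) := by
        ring
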